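/- arXiv:math/9310227 — 3 statements merged into one kernel-verified Lean document; each statement's English description precedes it below -/
import Mathlib

section
/- Let C be a binary linear code of even length 2n whose coordinates are arranged so that C = φ(D) for some subset D ⊆ (Z/4Z)ⁿ. Then D is necessarily an additive subgroup of (Z/4Z)ⁿ if and only if for all u, v ∈ C, the vector (u + s(u)) ∗ (v + s(v)) ∈ C, where s swaps the left and right halves of a vector of length 2n and ∗ is componentwise multiplication in (Z/2Z)^{2n}. -/
def alphaZ4 (i : ZMod 4) : ZMod 2 := (i.val : ZMod 2)
def betaZ4 (i : ZMod 4) : ZMod 2 := ((i.val / 2 : ℕ) : ZMod 2)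
def gammaZ4 (i : ZMod 4) : ZMod 2 := betaZ4 i + alphaZ4 i

def grayMap {n : ℕ} (a : Fin n → ZMod 4) : (Fin n ⊕ Fin n) → ZMod 2 :=
  Sum.elim (fun i => betaZ4 (a i)) (fun i => gammaZ4 (a i))

/-- The swap map interchanging the left and right halves of a binary vector
of length `2n` (indexed by `Fin n ⊕ Fin n`). -/
def swapMap {n : ℕ} (u : (Fin n ⊕ Fin n) → ZMod 2) : (Fin n ⊕ Fin n) → ZMod 2 :=
  u ∘ Sum.swap

lemma beta_add : ∀ x y : ZMod 4,
    betaZ4 (x + y) = betaZ4 x + betaZ4 y + (betaZ4 x + gammaZ4 x) * (betaZ4 y + gammaZ4 y) := by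
  decide

lemma gamma_add : ∀ x y : ZMod 4,
    gammaZ4 (x + y) = gammaZ4 x + gammaZ4 y + (betaZ4 x + gammaZ4 x) * (betaZ4 y + gammaZ4 y) := by
  decide

lemma bg_inj (x y : ZMod 4) (h1 : betaZ4 x = betaZ4 y) (h2 : gammaZ4 x = gammaZ4 y) : x = y := by
  revert h1 h2; revert x y; decide

lemma gray_inj {n : ℕ} {a b : Fin n → ZMod 4} (h : grayMap a = grayMap b) : a = b := by
  funext i
  exact bg_inj _ _ (congrFun h (Sum.inl i)) (congrFun h (Sum.inr i))

lemma gray_add {n : ℕ} (a b : Fin n → ZMod 4) :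
    grayMap (a + b) = grayMap a + grayMap b +
      (grayMap a + swapMap (grayMap a)) * (grayMap b + swapMap (grayMap b)) := by
  funext i
  cases i with
  | inl i =>
      simpa [grayMap, swapMap, Sum.swap] using beta_add (a i) (b i)
  | inr i =>
      have := gamma_add (a i) (b i)
      simp only [grayMap, swapMap, Sum.swap, Pi.add_apply, Pi.mul_apply, Sum.elim_inr,
        Function.comp_apply, Sum.elim_inl]
      rw [this]; ring

theorem z4linear_iff_swap {n : ℕ}
    (C : AddSubgroup ((Fin n ⊕ Fin n) → ZMod 2)) (D : Set (Fin n → ZMod 4))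
    (hCD : grayMap '' D = (C : Set ((Fin n ⊕ Fin n) → ZMod 2))) :
    (∃ S : AddSubgroup (Fin n → ZMod 4), (S : Set (Fin n → ZMod 4)) = D) ↔
    (∀ u ∈ C, ∀ v ∈ C, (u + swapMap u) * (v + swapMap v) ∈ C) := by
  have memC : ∀ a, a ∈ D → grayMap a ∈ C := fun a ha => by
    have : grayMap a ∈ grayMap '' D := Set.mem_image_of_mem _ ha
    rwa [hCD] at this
  constructor
  · rintro ⟨S, rfl⟩ u hu v hv
    have hu' : u ∈ grayMap '' (S : Set _) := by rw [hCD]; exact hu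
    have hv' : v ∈ grayMap '' (S : Set _) := by rw [hCD]; exact hv
    obtain ⟨a, ha, rfl⟩ := hu'
    obtain ⟨b, hb, rfl⟩ := hv'
    have hab : grayMap (a + b) ∈ C := memC _ (S.add_mem ha hb)
    have key : (grayMap a + swapMap (grayMap a)) * (grayMap b + swapMap (grayMap b))
        = grayMap (a + b) - (grayMap a + grayMap b) := by
      rw [gray_add]; ring
    rw [key]
    exact C.sub_mem hab (C.add_mem hu hv)
  · intro h
    have h0 : (0 : Fin n → ZMod 4) ∈ D := by
      have : (0 : (Fin n ⊕ Fin n) → ZMod 2) ∈ grayMap '' D := by rw [hCD]; exact C.zero_mem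
      obtain ⟨d, hd, hdeq⟩ := this
      have : grayMap d = grayMap (0 : Fin n → ZMod 4) := by
        rw [hdeq]; funext i
        have h4 : betaZ4 0 = 0 ∧ gammaZ4 0 = 0 := by decide
        cases i <;> simp [grayMap, h4.1, h4.2]
      rwa [gray_inj this] at hd
    have hadd : ∀ a ∈ D, ∀ b ∈ D, a + b ∈ D := by
      intro a ha b hb
      have hX := h _ (memC a ha) _ (memC b hb)
      have hab : grayMap (a + b) ∈ C := by
        rw [gray_add]
        exact C.add_mem (C.add_mem (memC a ha) (memC b hb)) hX
      have : grayMap (a + b) ∈ grayMap '' D := by rw [hCD]; exact hab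
      obtain ⟨d, hd, hdeq⟩ := this
      rwa [gray_inj hdeq] at hd
    refine ⟨{ carrier := D, zero_mem' := h0,
              add_mem' := fun {a b} ha hb => hadd a ha b hb,
              neg_mem' := ?_ }, rfl⟩
    intro a ha
    have hneg : -a = a + a + a := by
      funext i
      have : ∀ x : ZMod 4, -x = x + x + x := by decide
      simpa using this (a i)
    change a ∈ D at ha
    show -a ∈ D
    rw [hneg]
    exact hadd _ (hadd _ ha _ ha) _ ha
end

section
/- If u and v are codewords in a binary code of length 2^m indexed by (Z/2Z)^m represented by Boolean polynomials of degree at most r (with swap s flipping the last variable), then (u + s(u)) ∗ (v + s(v)) is represented by a Boolean polynomial of degree at most 2r − 2, i.e., it lies in RM(2r−2, m). -/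
/-- The Reed-Muller code RM(r,m): the span of the evaluation vectors of the
monomials of degree at most `r` in `m` Boolean variables. -/
def RM (r m : ℕ) : Submodule (ZMod 2) ((Fin m → ZMod 2) → ZMod 2) :=
  Submodule.span (ZMod 2)
    { v | ∃ S : Finset (Fin m), S.card ≤ r ∧ v = fun x => ∏ j ∈ S, x j }

/-- A binary code of even length `2n` (coordinates indexed by `ι`) is
`Z4`-linear if after some identification of its coordinates with
`Fin n ⊕ Fin n` it is the Gray image of a linear quaternary code. -/
def IsZ4Linear {ι : Type} (C : Set (ι → ZMod 2)) (n : ℕ) : Prop :=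
  ∃ e : ι ≃ (Fin n ⊕ Fin n), ∃ D : AddSubgroup (Fin n → ZMod 4),
    (fun c => c ∘ e.symm) '' C = grayMap '' (D : Set (Fin n → ZMod 4))

/-- The coordinate permutation of `(Z/2Z)^m` flipping the last bit. -/
def flipLast {m : ℕ} (hm : 0 < m) (x : Fin m → ZMod 2) : Fin m → ZMod 2 :=
  Function.update x ⟨m - 1, by omega⟩ (x ⟨m - 1, by omega⟩ + 1)

lemma zmod2_mul_self (a : ZMod 2) : a * a = a := by revert a; decide

lemma RM_mul {a b m : ℕ} {u v : (Fin m → ZMod 2) → ZMod 2}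
    (hu : u ∈ RM a m) (hv : v ∈ RM b m) : u * v ∈ RM (a + b) m := by
  induction hu using Submodule.span_induction with
  | mem f hf =>
    induction hv using Submodule.span_induction with
    | mem g hg =>
      obtain ⟨S, hS, rfl⟩ := hf
      obtain ⟨T, hT, rfl⟩ := hg
      apply Submodule.subset_span
      refine ⟨S ∪ T, ?_, ?_⟩
      · calc (S ∪ T).card ≤ S.card + T.card := Finset.card_union_le S T
          _ ≤ a + b := Nat.add_le_add hS hT
      · funext x
        have h1 : (∏ j ∈ S ∪ T, x j) * ∏ j ∈ S ∩ T, x j = (∏ j ∈ S, x j) * ∏ j ∈ T, x j :=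
          Finset.prod_union_inter
        have h2 : ∏ j ∈ S ∪ T, x j =
            (∏ j ∈ S ∪ T, x j) * ∏ j ∈ S ∩ T, x j := by
          rw [← Finset.prod_sdiff (Finset.inter_subset_union (s := S) (t := T))]
          rw [mul_assoc, zmod2_mul_self]
        simp only [Pi.mul_apply]
        rw [← h1, ← h2]
    | zero => simpa using (RM (a+b) m).zero_mem
    | add x y _ _ hx hy => rw [mul_add]; exact (RM (a+b) m).add_mem hx hy
    | smul c x _ hx => rw [mul_smul_comm]; exact (RM (a+b) m).smul_mem c hx
  | zero => simpa using (RM (a+b) m).zero_mem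
  | add x y _ _ hx hy => rw [add_mul]; exact (RM (a+b) m).add_mem hx hy
  | smul c x _ hx => rw [smul_mul_assoc]; exact (RM (a+b) m).smul_mem c hx

lemma RM_swap {r m : ℕ} (hm : 0 < m) {u : (Fin m → ZMod 2) → ZMod 2}
    (hu : u ∈ RM r m) : u + u ∘ flipLast hm ∈ RM (r - 1) m := by
  induction hu using Submodule.span_induction with
  | mem f hf =>
    obtain ⟨S, hS, rfl⟩ := hf
    set k : Fin m := ⟨m - 1, by omega⟩ with hk
    by_cases hkS : k ∈ S
    · have heq : (fun x => ∏ j ∈ S, x j) + (fun x => ∏ j ∈ S, x j) ∘ flipLast hm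
          = fun x => ∏ j ∈ S.erase k, x j := by
        funext x
        simp only [Pi.add_apply, Function.comp_apply]
        rw [← Finset.mul_prod_erase S _ hkS, ← Finset.mul_prod_erase S _ hkS]
        have h1 : ∏ j ∈ S.erase k, flipLast hm x j = ∏ j ∈ S.erase k, x j := by
          apply Finset.prod_congr rfl
          intro j hj
          have : j ≠ k := Finset.ne_of_mem_erase hj
          simp only [flipLast]; exact Function.update_of_ne this _ _
        have h2 : flipLast hm x k = x k + 1 := by
          simp [flipLast, hk]
        rw [h1, h2]
        ring_nf
        rw [show ((2:ZMod 2)) = 0 by decide]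
        ring
      rw [heq]
      apply Submodule.subset_span
      refine ⟨S.erase k, ?_, rfl⟩
      have := Finset.card_erase_of_mem hkS
      omega
    · have heq : (fun x => ∏ j ∈ S, x j) + (fun x => ∏ j ∈ S, x j) ∘ flipLast hm
          = 0 := by
        funext x
        simp only [Pi.add_apply, Function.comp_apply, Pi.zero_apply]
        have h1 : ∏ j ∈ S, flipLast hm x j = ∏ j ∈ S, x j := by
          apply Finset.prod_congr rfl
          intro j hj
          have : j ≠ k := fun h => hkS (h ▸ hj)
          simp only [flipLast]; exact Function.update_of_ne this _ _
        rw [h1]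
        have : ∀ a : ZMod 2, a + a = 0 := by decide
        exact this _
      rw [heq]
      exact (RM (r-1) m).zero_mem
  | zero => simpa using (RM (r-1) m).zero_mem
  | add x y _ _ hx hy =>
    have : (x + y) + (x + y) ∘ flipLast hm = (x + x ∘ flipLast hm) + (y + y ∘ flipLast hm) := by
      funext t; simp [Function.comp]; ring
    rw [this]; exact (RM (r-1) m).add_mem hx hy
  | smul c x _ hx =>
    have : (c • x) + (c • x) ∘ flipLast hm = c • (x + x ∘ flipLast hm) := by
      funext t; simp [Function.comp, mul_add]
    rw [this]; exact (RM (r-1) m).smul_mem c hx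

theorem rm_swap_degree_bound (r m : ℕ) (hm : 0 < m)
    (u v : (Fin m → ZMod 2) → ZMod 2) (hu : u ∈ RM r m) (hv : v ∈ RM r m) :
    (u + u ∘ flipLast hm) * (v + v ∘ flipLast hm) ∈ RM (2 * r - 2) m := by
  have h := RM_mul (RM_swap hm hu) (RM_swap hm hv)
  have : 2 * r - 2 = (r - 1) + (r - 1) := by omega
  rw [this]
  exact h
end

section
/- If D is a linear code over Z/4Z of length n, then the binary code C = φ(D) is distance invariant: for every c ∈ C, the multiset of Hamming distances {d(c, c') : c' ∈ C} equals the multiset of Hamming weights {wt(c') : c' ∈ C}. -/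
/-- Number of coordinates equal to 0. -/
def N0 {n : ℕ} (a : Fin n → ZMod 4) : ℕ := (Finset.univ.filter fun i => a i = 0).card
/-- Number of coordinates equal to ±1. -/
def N1 {n : ℕ} (a : Fin n → ZMod 4) : ℕ :=
  (Finset.univ.filter fun i => a i = 1 ∨ a i = 3).card
/-- Number of coordinates equal to 2. -/
def N2 {n : ℕ} (a : Fin n → ZMod 4) : ℕ := (Finset.univ.filter fun i => a i = 2).card

/-- The dual of a quaternary code under the standard inner product mod 4. -/
def dualSet {n : ℕ} (D : Set (Fin n → ZMod 4)) : Set (Fin n → ZMod 4) :=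
  { b | ∀ a ∈ D, ∑ i, a i * b i = 0 }

lemma pointwise (x y : ZMod 4) :
    ((if betaZ4 x ≠ betaZ4 y then 1 else 0) + (if gammaZ4 x ≠ gammaZ4 y then 1 else 0) : ℕ) =
    (if betaZ4 (x - y) ≠ 0 then 1 else 0) + (if gammaZ4 (x - y) ≠ 0 then 1 else 0) := by
  revert x y; decide

lemma key {n : ℕ} (a b : Fin n → ZMod 4) :
    hammingDist (grayMap a) (grayMap b) = hammingNorm (grayMap (a - b)) := by
  unfold hammingDist hammingNorm grayMap
  simp only [Finset.card_filter, Fintype.sum_sum_type, Sum.elim_inl, Sum.elim_inr,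
    Pi.sub_apply, ← Finset.sum_add_distrib]
  exact Finset.sum_congr rfl fun i _ => pointwise (a i) (b i)

lemma gray_inj_s10 {n : ℕ} : Function.Injective (grayMap (n := n)) := by
  intro a b h
  funext i
  have h1 := congrFun h (Sum.inl i)
  have h2 := congrFun h (Sum.inr i)
  simp only [grayMap, Sum.elim_inl, Sum.elim_inr] at h1 h2
  revert h1 h2
  have : ∀ x y : ZMod 4, betaZ4 x = betaZ4 y → gammaZ4 x = gammaZ4 y → x = y := by decide
  exact this (a i) (b i)

theorem grayImage_distance_invariant {n : ℕ} (D : AddSubgroup (Fin n → ZMod 4))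
    (c : (Fin n ⊕ Fin n) → ZMod 2) (hc : c ∈ grayMap '' (D : Set (Fin n → ZMod 4)))
    (w : ℕ) :
    Nat.card { c' ∈ grayMap '' (D : Set (Fin n → ZMod 4)) | hammingDist c c' = w } =
    Nat.card { c' ∈ grayMap '' (D : Set (Fin n → ZMod 4)) | hammingNorm c' = w } := by
  obtain ⟨a0, ha0, rfl⟩ := hc
  have himg : ∀ (P : ((Fin n ⊕ Fin n) → ZMod 2) → Prop),
      { c' ∈ grayMap '' (D : Set (Fin n → ZMod 4)) | P c' } =
      grayMap '' { a ∈ (D : Set (Fin n → ZMod 4)) | P (grayMap a) } := by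
    intro P
    ext c'
    constructor
    · rintro ⟨⟨a, ha, rfl⟩, hP⟩
      exact ⟨a, ⟨ha, hP⟩, rfl⟩
    · rintro ⟨a, ⟨ha, hP⟩, rfl⟩
      exact ⟨⟨a, ha, rfl⟩, hP⟩
  rw [himg, himg]
  rw [Nat.card_coe_set_eq, Nat.card_coe_set_eq,
    Set.ncard_image_of_injective _ gray_inj_s10, Set.ncard_image_of_injective _ gray_inj_s10]
  have hset : { a ∈ (D : Set (Fin n → ZMod 4)) | hammingDist (grayMap a0) (grayMap a) = w } =
      (fun b => b + a0) '' { a ∈ (D : Set (Fin n → ZMod 4)) | hammingNorm (grayMap a) = w } := by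
    ext a
    constructor
    · rintro ⟨ha, hd⟩
      refine ⟨a - a0, ⟨D.sub_mem ha ha0, ?_⟩, by ring⟩
      rw [← key, hammingDist_comm, hd]
    · rintro ⟨b, ⟨hb, hn⟩, rfl⟩
      refine ⟨D.add_mem hb ha0, ?_⟩
      rw [hammingDist_comm, key]
      simpa using hn
  rw [hset, Set.ncard_image_of_injective _ (add_left_injective a0)]
end
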